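/- Let k be an algebraically closed field of characteristic zero, A a finitely generated commutative k-algebra, and G a finite group acting on A by k-algebra automorphisms. Let 0 → E' → E → E'' → 0 be a degreewise short exact sequence of bounded-above cochain complexes of finitely generated projective A-modules, with G-equivariant structures on all terms and all maps (differentials and the maps of complexes) G-equivariant. Say that such a complex C satisfies condition (T) if for every maximal ideal n of A and every integer j the stabilizer G_n acts trivially on H^j(C ⊗_A A/n). If two of the three complexes E', E, E'' satisfy condition (T), then so does the third. -/

import Mathlib

/-!
STATEMENT 17: over an algebraically closed field `k` of characteristic zero,
let `G` be a finite group acting on a finitely generated commutative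
`k`-algebra `A`, and let `0 → E₁ → E₂ → E₃ → 0` be a degreewise short exact
sequence of bounded-above `G`-equivariant cochain complexes of finitely
generated projective `A`-modules (all maps `G`-equivariant).  Say a complex
`C` satisfies condition (T) if for every maximal ideal `n` of `A` and every
`j` the stabilizer `G_n` acts trivially on `H^j(C ⊗[A] A/n)`.  If two of
`E₁`, `E₂`, `E₃` satisfy (T), so does the third.

`H^j(C ⊗[A] A/n)` is computed from the termwise fibers `C^j/nC^j` (the terms
are flat); "`g` fixes the class of a mod-`n` cocycle `x`" is expressed as
`g • x - x ∈ range(d^{j-1}) ⊔ n • ⊤`.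
-/

open TensorProduct

universe u v w

/-- A (`ℤ`-indexed, cohomologically graded) cochain complex of `R`-modules,
with differentials indexed by pairs `(i, j)` with `i + 1 = j`. -/
structure ModComplex.{s, r} (R : Type s) [Ring R] : Type (max s (r + 1)) where
  X : ℤ → Type r
  [acg : ∀ j, AddCommGroup (X j)]
  [mod : ∀ j, Module R (X j)]
  d : ∀ i j : ℤ, i + 1 = j → (X i →ₗ[R] X j)
  d_comp_d : ∀ (i j l : ℤ) (hij : i + 1 = j) (hjl : j + 1 = l) (x : X i),
    d j l hjl (d i j hij x) = 0

attribute [instance] ModComplex.acg ModComplex.mod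

/-- A `G`-equivariant cochain complex of `A`-modules: each term carries a
`G`-action compatible with the `G`-action on `A`, and the differentials are
`G`-equivariant. -/
structure EqvModComplex.{s, t, r} (A : Type s) (G : Type t) [CommRing A]
    [Group G] [MulSemiringAction G A] : Type (max s t (r + 1)) where
  X : ℤ → Type r
  [acg : ∀ j, AddCommGroup (X j)]
  [mod : ∀ j, Module A (X j)]
  [act : ∀ j, DistribMulAction G (X j)]
  equivariant : ∀ (j : ℤ) (g : G) (a : A) (x : X j),
    g • (a • x) = (g • a) • (g • x)
  d : ∀ i j : ℤ, i + 1 = j → (X i →ₗ[A] X j)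
  d_comp_d : ∀ (i j l : ℤ) (hij : i + 1 = j) (hjl : j + 1 = l) (x : X i),
    d j l hjl (d i j hij x) = 0
  d_equivariant : ∀ (i j : ℤ) (h : i + 1 = j) (g : G) (x : X i),
    d i j h (g • x) = g • d i j h x

attribute [instance] EqvModComplex.acg EqvModComplex.mod EqvModComplex.act


/-- Condition (T): for every maximal ideal `n ⊆ A` and every `j`, the
stabilizer `G_n` acts trivially on `H^j(E ⊗[A] A/n)`. -/
def TrivialStabilizerActionOnFiberCohomology
    (A : Type u) [CommRing A] (G : Type w) [Group G] [MulSemiringAction G A]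
    (E : EqvModComplex.{u, w, v} A G) : Prop :=
  ∀ n : Ideal A, n.IsMaximal → ∀ (j : ℤ) (x : E.X j),
    E.d j (j+1) rfl x ∈ n • (⊤ : Submodule A (E.X (j+1))) →
    ∀ g : G, (∀ a : A, g • a ∈ n ↔ a ∈ n) →
      g • x - x ∈ LinearMap.range (E.d (j-1) j (by omega)) ⊔
        n • (⊤ : Submodule A (E.X j))


/-!
Fix a maximal ideal `n` and an element `g` of its stabilizer, and write `Hʲ(C)` for
`Hʲ(C ⊗ A/n)`. Since `E₃` is termwise projective, the sequence splits termwise and so stays exact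
modulo `n`; the usual diagram chase then gives `g`-compatible exact sequences
`Hʲ(E₁) → Hʲ(E₂) → Hʲ(E₃)`, `Hʲ(E₂) → Hʲ(E₃) → Hʲ⁺¹(E₁)` and `Hʲ⁻¹(E₃) → Hʲ(E₁) → Hʲ(E₂)`.
If `g` acts trivially on the outer terms of one of them, then `g - 1` maps the middle term into
the image of the left-hand one, on which `g - 1` vanishes; so `(g - 1)² = 0` on the middle term.
Modulo `(g - 1)²` we have `g ^ r - 1 ≡ r (g - 1)`, so `0 = g ^ |G| - 1 ≡ |G| (g - 1)`, and `|G|` is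
invertible in `A` because `A` is an algebra over a field of characteristic zero.
-/

open LinearMap

theorem Submodule.smul_sub_self_mem_of_pow_eq_one {A M G : Type*} [Ring A] [AddCommGroup M]
    [Module A M] [Monoid G] [DistribMulAction G M] (R : Submodule A M) {g : G}
    (hR : ∀ y ∈ R, g • y ∈ R) {m : ℕ} (hm : g ^ m = 1) (hmA : IsUnit (m : A)) {x : M}
    (hx : g • (g • x - x) - (g • x - x) ∈ R) : g • x - x ∈ R := by
  have hpow (r : ℕ) : g ^ r • x - x - r • (g • x - x) ∈ R := by
    induction r with
    | zero => simp
    | succ r ih =>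
      have hstep : g ^ (r + 1) • x - x - (r + 1) • (g • x - x) =
          g • (g ^ r • x - x - r • (g • x - x)) + r • (g • (g • x - x) - (g • x - x)) := by
        rw [pow_succ', mul_smul]
        simp only [smul_sub, smul_comm g r, add_smul, one_smul]
        abel
      rw [hstep]
      exact add_mem (hR _ ih) (R.nsmul_mem hx r)
  have hmx := hpow m
  rw [hm, one_smul, sub_self, zero_sub, neg_mem_iff, ← Nat.cast_smul_eq_nsmul A] at hmx
  exact (R.smul_mem_iff_of_isUnit hmA).mp hmx

section SmulTop

variable {A : Type*} [CommRing A] {M N P : Type*} [AddCommGroup M] [Module A M]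
  [AddCommGroup N] [Module A N] [AddCommGroup P] [Module A P]

theorem smul_mem_ideal_smul_top {G : Type*} [Monoid G] [SMul G A] [DistribMulAction G M]
    {I : Ideal A} {g : G} (hI : ∀ a ∈ I, g • a ∈ I)
    (hM : ∀ (a : A) (x : M), g • a • x = (g • a) • g • x) {x : M}
    (hx : x ∈ I • (⊤ : Submodule A M)) : g • x ∈ I • (⊤ : Submodule A M) := by
  refine Submodule.smul_induction_on hx (fun a ha y _ => ?_) fun y z hy hz => ?_
  · rw [hM]
    exact Submodule.smul_mem_smul (hI a ha) trivial
  · rw [smul_add]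
    exact add_mem hy hz

theorem exists_mem_smul_top_map_eq {f : M →ₗ[A] N} (hf : Function.Surjective f) (I : Ideal A)
    {y : N} (hy : y ∈ I • (⊤ : Submodule A N)) : ∃ x ∈ I • (⊤ : Submodule A M), f x = y := by
  rwa [← Submodule.mem_map, Submodule.map_smul'', Submodule.map_top, range_eq_top.mpr hf]

theorem Function.Exact.exists_retraction_of_projective [Module.Projective A P] {f : M →ₗ[A] N}
    {g : N →ₗ[A] P} (hfg : Function.Exact f g) (hf : Function.Injective f)
    (hg : Function.Surjective g) : ∃ l : N →ₗ[A] M, l ∘ₗ f = LinearMap.id :=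
  (hfg.split_tfae hf hg).out 0 1 |>.mp (g.exists_rightInverse_of_surjective (range_eq_top.mpr hg))

end SmulTop

namespace EqvModComplex

variable {A : Type u} [CommRing A] {G : Type w} [Group G] [MulSemiringAction G A]

section Fiber

variable (E : EqvModComplex.{u, w, v} A G) (n : Ideal A)

def fiberCocycles (j : ℤ) : Submodule A (E.X j) :=
  Submodule.comap (E.d j (j + 1) rfl) (n • ⊤)

def fiberCoboundaries (j : ℤ) : Submodule A (E.X j) :=
  range (E.d (j - 1) j (by omega)) ⊔ n • ⊤

def FixesFiberCohomology (g : G) (j : ℤ) : Prop :=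
  ∀ x ∈ E.fiberCocycles n j, g • x - x ∈ E.fiberCoboundaries n j

variable {E n}

theorem mem_fiberCocycles_iff {i j : ℤ} (h : i + 1 = j) {x : E.X i} :
    x ∈ E.fiberCocycles n i ↔ E.d i j h x ∈ n • (⊤ : Submodule A (E.X j)) := by
  subst h
  rfl

theorem mem_fiberCoboundaries_iff {i j : ℤ} (h : i + 1 = j) {x : E.X j} :
    x ∈ E.fiberCoboundaries n j ↔
      ∃ v, ∃ m ∈ n • (⊤ : Submodule A (E.X j)), E.d i j h v + m = x := by
  obtain rfl : i = j - 1 := by omega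
  simp only [fiberCoboundaries, Submodule.mem_sup, mem_range, exists_exists_eq_and]

theorem d_smul_sub_self {i j : ℤ} (h : i + 1 = j) (g : G) (x : E.X i) :
    E.d i j h (g • x - x) = g • E.d i j h x - E.d i j h x := by
  rw [map_sub, E.d_equivariant]

variable {g : G} (hg : ∀ a ∈ n, g • a ∈ n)
include hg

theorem smul_mem_smul_top {j : ℤ} {x : E.X j} (hx : x ∈ n • (⊤ : Submodule A (E.X j))) :
    g • x ∈ n • (⊤ : Submodule A (E.X j)) :=
  smul_mem_ideal_smul_top hg (E.equivariant j g) hx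

theorem smul_mem_fiberCocycles {j : ℤ} {x : E.X j} (hx : x ∈ E.fiberCocycles n j) :
    g • x ∈ E.fiberCocycles n j := by
  rw [mem_fiberCocycles_iff rfl, E.d_equivariant]
  exact E.smul_mem_smul_top hg hx

theorem smul_mem_fiberCoboundaries {j : ℤ} {x : E.X j} (hx : x ∈ E.fiberCoboundaries n j) :
    g • x ∈ E.fiberCoboundaries n j := by
  have hj : j - 1 + 1 = j := by omega
  obtain ⟨v, m, hm, rfl⟩ := (mem_fiberCoboundaries_iff hj).mp hx
  rw [smul_add, ← E.d_equivariant]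
  exact (mem_fiberCoboundaries_iff hj).mpr ⟨g • v, g • m, E.smul_mem_smul_top hg hm, rfl⟩

theorem fixesFiberCohomology_of_sq {j : ℤ} {m : ℕ} (hm : g ^ m = 1) (hmA : IsUnit (m : A))
    (h : ∀ x ∈ E.fiberCocycles n j, g • (g • x - x) - (g • x - x) ∈ E.fiberCoboundaries n j) :
    E.FixesFiberCohomology n g j := fun x hx =>
  (E.fiberCoboundaries n j).smul_sub_self_mem_of_pow_eq_one
    (fun _ => E.smul_mem_fiberCoboundaries hg) hm hmA (h x hx)

end Fiber

theorem trivialStabilizerActionOnFiberCohomology_iff (E : EqvModComplex.{u, w, v} A G) :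
    TrivialStabilizerActionOnFiberCohomology A G E ↔ ∀ n : Ideal A, n.IsMaximal →
      ∀ g : G, (∀ a : A, g • a ∈ n ↔ a ∈ n) → ∀ j, E.FixesFiberCohomology n g j := by
  unfold FixesFiberCohomology
  exact ⟨fun h n hn g hg j x hx => h n hn j x hx g hg, fun h n hn j x hx g hg => h n hn g hg j x hx⟩

structure Hom (E F : EqvModComplex.{u, w, v} A G) where
  f : ∀ j, E.X j →ₗ[A] F.X j
  comm : ∀ (i j : ℤ) (h : i + 1 = j) (x : E.X i), f j (E.d i j h x) = F.d i j h (f i x)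
  equivariant : ∀ (j : ℤ) (g : G) (x : E.X j), f j (g • x) = g • f j x

namespace Hom

variable {E F : EqvModComplex.{u, w, v} A G} (φ : E.Hom F) {n : Ideal A} {j : ℤ}

theorem map_mem_smul_top {x : E.X j} (hx : x ∈ n • (⊤ : Submodule A (E.X j))) :
    φ.f j x ∈ n • (⊤ : Submodule A (F.X j)) :=
  Submodule.smul_top_le_comap_smul_top n _ hx

theorem map_smul_sub_self (g : G) (x : E.X j) : φ.f j (g • x - x) = g • φ.f j x - φ.f j x := by
  rw [map_sub, φ.equivariant]

theorem map_mem_fiberCocycles {x : E.X j} (hx : x ∈ E.fiberCocycles n j) :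
    φ.f j x ∈ F.fiberCocycles n j := by
  rw [mem_fiberCocycles_iff rfl, ← φ.comm]
  exact φ.map_mem_smul_top hx

theorem map_mem_fiberCoboundaries {x : E.X j} (hx : x ∈ E.fiberCoboundaries n j) :
    φ.f j x ∈ F.fiberCoboundaries n j := by
  have hj : j - 1 + 1 = j := by omega
  obtain ⟨v, m, hm, rfl⟩ := (mem_fiberCoboundaries_iff hj).mp hx
  rw [map_add, φ.comm]
  exact (mem_fiberCoboundaries_iff hj).mpr ⟨_, _, φ.map_mem_smul_top hm, rfl⟩

end Hom

variable {E₁ E₂ E₃ : EqvModComplex.{u, w, v} A G}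

structure IsSplitShortExact (α : E₁.Hom E₂) (β : E₂.Hom E₃) : Prop where
  exact : ∀ j, Function.Exact (α.f j) (β.f j)
  surjective : ∀ j, Function.Surjective (β.f j)
  exists_retraction : ∀ j, ∃ l : E₂.X j →ₗ[A] E₁.X j, l ∘ₗ α.f j = LinearMap.id

namespace IsSplitShortExact

variable {α : E₁.Hom E₂} {β : E₂.Hom E₃} (hS : IsSplitShortExact α β) {n : Ideal A}
include hS

theorem mem_smul_top_of_map_mem {j : ℤ} {x : E₁.X j}
    (hx : α.f j x ∈ n • (⊤ : Submodule A (E₂.X j))) : x ∈ n • (⊤ : Submodule A (E₁.X j)) := by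
  obtain ⟨l, hl⟩ := hS.exists_retraction j
  simpa [← comp_apply, hl] using Submodule.smul_top_le_comap_smul_top n l hx

theorem exists_sub_mem_fiberCoboundaries {j : ℤ} {y : E₂.X j} (hy : y ∈ E₂.fiberCocycles n j)
    (hβy : β.f j y ∈ E₃.fiberCoboundaries n j) :
    ∃ w ∈ E₁.fiberCocycles n j, y - α.f j w ∈ E₂.fiberCoboundaries n j := by
  have hj : j - 1 + 1 = j := by omega
  obtain ⟨t, m, hm, ht⟩ := (mem_fiberCoboundaries_iff hj).mp hβy
  obtain ⟨t, rfl⟩ := hS.surjective _ t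
  obtain ⟨m, hm', rfl⟩ := exists_mem_smul_top_map_eq (hS.surjective j) n hm
  obtain ⟨w, hw⟩ := (hS.exact j (y - E₂.d _ _ hj t - m)).mp <| by
    rw [map_sub, map_sub, β.comm, ← ht]
    abel
  refine ⟨w, hS.mem_smul_top_of_map_mem ?_,
    (mem_fiberCoboundaries_iff hj).mpr ⟨t, m, hm', by rw [hw]; abel⟩⟩
  rw [α.comm, hw, map_sub, map_sub, E₂.d_comp_d, sub_zero]
  exact sub_mem hy (Submodule.smul_top_le_comap_smul_top n _ hm')

theorem exists_lift_of_mem_fiberCocycles {j : ℤ} {z : E₃.X j} (hz : z ∈ E₃.fiberCocycles n j) :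
    ∃ (y : E₂.X j) (w : E₁.X (j + 1)), β.f j y = z ∧ w ∈ E₁.fiberCocycles n (j + 1) ∧
      E₂.d j (j + 1) rfl y - α.f (j + 1) w ∈ n • (⊤ : Submodule A (E₂.X (j + 1))) := by
  obtain ⟨y, rfl⟩ := hS.surjective j z
  obtain ⟨m, hm, hmd⟩ := exists_mem_smul_top_map_eq (hS.surjective _) n hz
  obtain ⟨w, hw⟩ := (hS.exact _ (E₂.d j (j + 1) rfl y - m)).mp <| by
    rw [map_sub, β.comm, hmd, sub_self]
  refine ⟨y, w, rfl, hS.mem_smul_top_of_map_mem ?_, by rwa [hw, sub_sub_cancel]⟩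
  rw [α.comm, hw, map_sub, E₂.d_comp_d, zero_sub]
  exact neg_mem (Submodule.smul_top_le_comap_smul_top n _ hm)

theorem exists_mem_fiberCocycles_map_eq {j : ℤ} {y : E₂.X j} {w : E₁.X (j + 1)}
    (hw : w ∈ E₁.fiberCoboundaries n (j + 1))
    (hyw : E₂.d j (j + 1) rfl y - α.f (j + 1) w ∈ n • (⊤ : Submodule A (E₂.X (j + 1)))) :
    ∃ y' ∈ E₂.fiberCocycles n j, β.f j y' = β.f j y := by
  obtain ⟨v, m, hm, rfl⟩ := (mem_fiberCoboundaries_iff rfl).mp hw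
  refine ⟨y - α.f j v, ?_, by rw [map_sub, (hS.exact j).apply_apply_eq_zero, sub_zero]⟩
  have hsplit : E₂.d j (j + 1) rfl (y - α.f j v) =
      (E₂.d j (j + 1) rfl y - α.f (j + 1) (E₁.d j (j + 1) rfl v + m)) + α.f (j + 1) m := by
    rw [map_sub, ← α.comm, map_add]
    abel
  rw [mem_fiberCocycles_iff rfl, hsplit]
  exact add_mem hyw (α.map_mem_smul_top hm)

theorem map_mem_fiberCocycles_of_sub_d_mem {i j : ℤ} (h : i + 1 = j) {x : E₁.X j} {z : E₂.X i}
    (hxz : α.f j x - E₂.d i j h z ∈ n • (⊤ : Submodule A (E₂.X j))) :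
    β.f i z ∈ E₃.fiberCocycles n i := by
  have hβ := β.map_mem_smul_top hxz
  rwa [map_sub, (hS.exact j).apply_apply_eq_zero, zero_sub, neg_mem_iff, β.comm,
    ← mem_fiberCocycles_iff h] at hβ

theorem mem_fiberCoboundaries_of_sub_d_mem {i j : ℤ} (h : i + 1 = j) {x : E₁.X j} {z : E₂.X i}
    (hxz : α.f j x - E₂.d i j h z ∈ n • (⊤ : Submodule A (E₂.X j)))
    (hz : β.f i z ∈ E₃.fiberCoboundaries n i) :
    x ∈ E₁.fiberCoboundaries n j := by
  have hi : i - 1 + 1 = i := by omega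
  obtain ⟨t, m, hm, ht⟩ := (mem_fiberCoboundaries_iff hi).mp hz
  obtain ⟨t, rfl⟩ := hS.surjective _ t
  obtain ⟨m, hm', rfl⟩ := exists_mem_smul_top_map_eq (hS.surjective i) n hm
  obtain ⟨v, hv⟩ := (hS.exact i (z - E₂.d _ _ hi t - m)).mp <| by
    rw [map_sub, map_sub, β.comm, ← ht]
    abel
  refine (mem_fiberCoboundaries_iff h).mpr ⟨v, x - E₁.d i j h v, hS.mem_smul_top_of_map_mem ?_,
    by abel⟩
  have hsplit : α.f j (x - E₁.d i j h v) = (α.f j x - E₂.d i j h z) + E₂.d i j h m := by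
    rw [map_sub, α.comm, hv, map_sub, map_sub, E₂.d_comp_d]
    abel
  rw [hsplit]
  exact add_mem hxz (Submodule.smul_top_le_comap_smul_top n _ hm')

variable {g : G} (hg : ∀ a ∈ n, g • a ∈ n) {m : ℕ} (hm : g ^ m = 1) (hmA : IsUnit (m : A))
include hg hm hmA

theorem fixesFiberCohomology_middle {j : ℤ} (h₁ : E₁.FixesFiberCohomology n g j)
    (h₃ : E₃.FixesFiberCohomology n g j) : E₂.FixesFiberCohomology n g j := by
  refine E₂.fixesFiberCohomology_of_sq hg hm hmA fun x hx => ?_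
  have hy : g • x - x ∈ E₂.fiberCocycles n j := sub_mem (E₂.smul_mem_fiberCocycles hg hx) hx
  obtain ⟨w, hw, hyw⟩ := hS.exists_sub_mem_fiberCoboundaries hy <| by
    rw [β.map_smul_sub_self]
    exact h₃ _ (β.map_mem_fiberCocycles hx)
  have hsplit : g • (g • x - x) - (g • x - x) =
      (g • (g • x - x - α.f j w) - (g • x - x - α.f j w)) + α.f j (g • w - w) := by
    rw [α.map_smul_sub_self]
    simp only [smul_sub]
    abel
  rw [hsplit]
  exact add_mem (sub_mem (E₂.smul_mem_fiberCoboundaries hg hyw) hyw)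
    (α.map_mem_fiberCoboundaries (h₁ w hw))

theorem fixesFiberCohomology_right {j : ℤ} (h₁ : E₁.FixesFiberCohomology n g (j + 1))
    (h₂ : E₂.FixesFiberCohomology n g j) : E₃.FixesFiberCohomology n g j := by
  refine E₃.fixesFiberCohomology_of_sq hg hm hmA fun x hx => ?_
  obtain ⟨y, w, rfl, hw, hyw⟩ := hS.exists_lift_of_mem_fiberCocycles hx
  obtain ⟨y', hy', hy'β⟩ := hS.exists_mem_fiberCocycles_map_eq (y := g • y - y) (h₁ w hw) <| by
    have hsplit : E₂.d j (j + 1) rfl (g • y - y) - α.f (j + 1) (g • w - w) =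
        g • (E₂.d j (j + 1) rfl y - α.f (j + 1) w) - (E₂.d j (j + 1) rfl y - α.f (j + 1) w) := by
      rw [E₂.d_smul_sub_self, α.map_smul_sub_self]
      simp only [smul_sub]
      abel
    rw [hsplit]
    exact sub_mem (E₂.smul_mem_smul_top hg hyw) hyw
  rw [← β.map_smul_sub_self, ← hy'β, ← β.map_smul_sub_self]
  exact β.map_mem_fiberCoboundaries (h₂ y' hy')

theorem fixesFiberCohomology_left {j : ℤ} (h₂ : E₂.FixesFiberCohomology n g j)
    (h₃ : E₃.FixesFiberCohomology n g (j - 1)) : E₁.FixesFiberCohomology n g j := by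
  refine E₁.fixesFiberCohomology_of_sq hg hm hmA fun x hx => ?_
  have hj : j - 1 + 1 = j := by omega
  obtain ⟨z, c, hc, hzc⟩ := (mem_fiberCoboundaries_iff hj).mp (h₂ _ (α.map_mem_fiberCocycles hx))
  have hxz : α.f j (g • x - x) - E₂.d _ _ hj z ∈ n • (⊤ : Submodule A (E₂.X j)) := by
    rwa [α.map_smul_sub_self, ← hzc, add_sub_cancel_left]
  refine hS.mem_fiberCoboundaries_of_sub_d_mem hj (z := g • z - z) ?_ <| by
    rw [β.map_smul_sub_self]
    exact h₃ _ (hS.map_mem_fiberCocycles_of_sub_d_mem hj hxz)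
  have hsplit : α.f j (g • (g • x - x) - (g • x - x)) - E₂.d _ _ hj (g • z - z) =
      g • (α.f j (g • x - x) - E₂.d _ _ hj z) - (α.f j (g • x - x) - E₂.d _ _ hj z) := by
    rw [α.map_smul_sub_self (x := g • x - x), E₂.d_smul_sub_self]
    simp only [smul_sub]
    abel
  rw [hsplit]
  exact sub_mem (E₂.smul_mem_smul_top hg hxz) hxz

end IsSplitShortExact

end EqvModComplex

theorem two_out_of_three_trivial_stabilizer_action_general
    (k : Type*) [Field k] [CharZero k]
    (A : Type u) [CommRing A] [Algebra k A]
    (G : Type w) [Group G] [Finite G] [MulSemiringAction G A]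
    (E₁ E₂ E₃ : EqvModComplex.{u, w, v} A G)
    (hproj₃ : ∀ j, Module.Projective A (E₃.X j))
    (α : ∀ j, E₁.X j →ₗ[A] E₂.X j) (β : ∀ j, E₂.X j →ₗ[A] E₃.X j)
    -- chain maps
    (hα : ∀ (i j : ℤ) (h : i + 1 = j) (x : E₁.X i),
      α j (E₁.d i j h x) = E₂.d i j h (α i x))
    (hβ : ∀ (i j : ℤ) (h : i + 1 = j) (x : E₂.X i),
      β j (E₂.d i j h x) = E₃.d i j h (β i x))
    -- G-equivariance of the maps
    (hαG : ∀ (j : ℤ) (g : G) (x : E₁.X j), α j (g • x) = g • α j x)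
    (hβG : ∀ (j : ℤ) (g : G) (x : E₂.X j), β j (g • x) = g • β j x)
    -- degreewise short exactness
    (hinj : ∀ j, Function.Injective (α j))
    (hsurj : ∀ j, Function.Surjective (β j))
    (hexact : ∀ j, LinearMap.range (α j) = LinearMap.ker (β j)) :
    (TrivialStabilizerActionOnFiberCohomology A G E₁ ∧
        TrivialStabilizerActionOnFiberCohomology A G E₂ →
      TrivialStabilizerActionOnFiberCohomology A G E₃) ∧
    (TrivialStabilizerActionOnFiberCohomology A G E₁ ∧
        TrivialStabilizerActionOnFiberCohomology A G E₃ →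
      TrivialStabilizerActionOnFiberCohomology A G E₂) ∧
    (TrivialStabilizerActionOnFiberCohomology A G E₂ ∧
        TrivialStabilizerActionOnFiberCohomology A G E₃ →
      TrivialStabilizerActionOnFiberCohomology A G E₁) := by
  have hS : EqvModComplex.IsSplitShortExact (⟨α, hα, hαG⟩ : E₁.Hom E₂) ⟨β, hβ, hβG⟩ := by
    have hexact' j : Function.Exact (α j) (β j) := exact_iff.mpr (hexact j).symm
    refine ⟨hexact', hsurj, fun j => ?_⟩
    have := hproj₃ j
    exact (hexact' j).exists_retraction_of_projective (hinj j) (hsurj j)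
  have hcard : IsUnit (Nat.card G : A) := by
    simpa using (IsUnit.mk0 (Nat.card G : k) (Nat.cast_ne_zero.mpr Nat.card_pos.ne')).map
      (algebraMap k A)
  simp only [EqvModComplex.trivialStabilizerActionOnFiberCohomology_iff]
  refine ⟨fun ⟨h₁, h₂⟩ n hn g hg j => ?_, fun ⟨h₁, h₃⟩ n hn g hg j => ?_,
    fun ⟨h₂, h₃⟩ n hn g hg j => ?_⟩
  · exact hS.fixesFiberCohomology_right (fun a => (hg a).2) pow_card_eq_one' hcard
      (h₁ n hn g hg (j + 1)) (h₂ n hn g hg j)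
  · exact hS.fixesFiberCohomology_middle (fun a => (hg a).2) pow_card_eq_one' hcard
      (h₁ n hn g hg j) (h₃ n hn g hg j)
  · exact hS.fixesFiberCohomology_left (fun a => (hg a).2) pow_card_eq_one' hcard
      (h₂ n hn g hg j) (h₃ n hn g hg (j - 1))

/-- **Two-out-of-three for condition (T)** along a degreewise short exact
sequence of `G`-equivariant complexes. -/
theorem two_out_of_three_trivial_stabilizer_action
    (k : Type*) [Field k] [CharZero k] [IsAlgClosed k]
    (A : Type u) [CommRing A] [Algebra k A] [Algebra.FiniteType k A]
    (G : Type w) [Group G] [Finite G] [MulSemiringAction G A] [SMulCommClass G k A]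
    (E₁ E₂ E₃ : EqvModComplex.{u, w, v} A G)
    (hproj₁ : ∀ j, Module.Projective A (E₁.X j))
    (hproj₂ : ∀ j, Module.Projective A (E₂.X j))
    (hproj₃ : ∀ j, Module.Projective A (E₃.X j))
    (hfin₁ : ∀ j, Module.Finite A (E₁.X j))
    (hfin₂ : ∀ j, Module.Finite A (E₂.X j))
    (hfin₃ : ∀ j, Module.Finite A (E₃.X j))
    (hbdd₁ : ∃ b : ℤ, ∀ j, b < j → ∀ x : E₁.X j, x = 0)
    (hbdd₂ : ∃ b : ℤ, ∀ j, b < j → ∀ x : E₂.X j, x = 0)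
    (hbdd₃ : ∃ b : ℤ, ∀ j, b < j → ∀ x : E₃.X j, x = 0)
    (α : ∀ j, E₁.X j →ₗ[A] E₂.X j) (β : ∀ j, E₂.X j →ₗ[A] E₃.X j)
    -- chain maps
    (hα : ∀ (i j : ℤ) (h : i + 1 = j) (x : E₁.X i),
      α j (E₁.d i j h x) = E₂.d i j h (α i x))
    (hβ : ∀ (i j : ℤ) (h : i + 1 = j) (x : E₂.X i),
      β j (E₂.d i j h x) = E₃.d i j h (β i x))
    -- G-equivariance of the maps
    (hαG : ∀ (j : ℤ) (g : G) (x : E₁.X j), α j (g • x) = g • α j x)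
    (hβG : ∀ (j : ℤ) (g : G) (x : E₂.X j), β j (g • x) = g • β j x)
    -- degreewise short exactness
    (hinj : ∀ j, Function.Injective (α j))
    (hsurj : ∀ j, Function.Surjective (β j))
    (hexact : ∀ j, LinearMap.range (α j) = LinearMap.ker (β j)) :
    (TrivialStabilizerActionOnFiberCohomology A G E₁ ∧
        TrivialStabilizerActionOnFiberCohomology A G E₂ →
      TrivialStabilizerActionOnFiberCohomology A G E₃) ∧
    (TrivialStabilizerActionOnFiberCohomology A G E₁ ∧
        TrivialStabilizerActionOnFiberCohomology A G E₃ →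
      TrivialStabilizerActionOnFiberCohomology A G E₂) ∧
    (TrivialStabilizerActionOnFiberCohomology A G E₂ ∧
        TrivialStabilizerActionOnFiberCohomology A G E₃ →
      TrivialStabilizerActionOnFiberCohomology A G E₁) :=
  two_out_of_three_trivial_stabilizer_action_general k A G E₁ E₂ E₃ hproj₃ α β hα hβ hαG hβG hinj
    hsurj hexact
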